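/- arXiv:2410.20854 — 5 statements merged into one kernel-verified Lean document; each statement's English description precedes it below -/
import Mathlib

section
/- For k ∈ ℕ≥1 and μ > 0, the integral ∫₀^{1/2} (s(1−s))^{(1−k)/k} · |w| / (1 + μ^{2k}|w|^{2k} s²) ds is bounded above by (2^{(k−1)/k}/μ) · π / (2 cos(π(k−1)/(2k))), uniformly in w ∈ ℂ. -/
/-!
On `(0, 1/2]` we have `1 - s ≥ 1/2`, so with `a = 1/k` the kernel is at most
`2^(1-a) s^(a-1)`. Extending the integral to `(0, ∞)` and rescaling by `c = (μ‖w‖)^k`, which turns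
`μ^(2k)‖w‖^(2k) s²` into `(cs)²`, reduces the bound to the Mellin-type integral
`∫₀^∞ u^(a-1) / (1 + u²) du = π / (2 sin (πa/2))`. That integral is `B(a/2, 1 - a/2) / 2` after the
substitutions `t = u²` and `x = t / (1 + t)`, and `B(p, 1 - p) = Γ(p) Γ(1 - p) = π / sin (πp)`.
-/

open Real Set MeasureTheory

theorem integral_Ioo_rpow_mul_one_sub_rpow {α β : ℝ} (hα : 0 < α) (hβ : 0 < β) :
    IntegrableOn (fun x : ℝ ↦ x ^ (α - 1) * (1 - x) ^ (β - 1)) (Ioo 0 1) ∧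
      ∫ x in Ioo (0 : ℝ) 1, x ^ (α - 1) * (1 - x) ^ (β - 1) = ProbabilityTheory.beta α β := by
  set f : ℝ → ℝ := fun x ↦ x ^ (α - 1) * (1 - x) ^ (β - 1)
  have hB := ProbabilityTheory.beta_pos hα hβ
  have hf : 0 ≤ᵐ[volume.restrict (Ioo 0 1)] f :=
    ae_restrict_of_forall_mem measurableSet_Ioo fun x hx ↦
      mul_nonneg (rpow_nonneg hx.1.le _) (rpow_nonneg (sub_nonneg.2 hx.2.le) _)
  have hlint :
      ∫⁻ x in Ioo 0 1, ENNReal.ofReal (f x) = ENNReal.ofReal (ProbabilityTheory.beta α β) := by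
    have h := ProbabilityTheory.lintegral_betaPDF_eq_one hα hβ
    simp_rw [ProbabilityTheory.lintegral_betaPDF, mul_assoc,
      ENNReal.ofReal_mul (one_div_pos.2 hB).le] at h
    rw [lintegral_const_mul' _ _ ENNReal.ofReal_ne_top] at h
    rw [ENNReal.eq_inv_of_mul_eq_one_left ((mul_comm _ _).trans h), one_div,
      ENNReal.ofReal_inv_of_pos hB, inv_inv]
  have hmeas : AEStronglyMeasurable f (volume.restrict (Ioo 0 1)) := by fun_prop
  refine ⟨⟨hmeas, ?_⟩, ?_⟩
  · rw [hasFiniteIntegral_iff_ofReal hf, hlint]; exact ENNReal.ofReal_lt_top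
  · rw [integral_eq_lintegral_of_nonneg_ae hf hmeas, hlint, ENNReal.toReal_ofReal hB.le]

theorem bijOn_div_one_add : BijOn (fun t : ℝ ↦ t / (1 + t)) (Ioi 0) (Ioo 0 1) := by
  refine InvOn.bijOn (f' := fun x ↦ x / (1 - x)) ⟨fun t (ht : 0 < t) ↦ ?_, fun x hx ↦ ?_⟩
    (fun t (ht : 0 < t) ↦ ⟨by positivity, (div_lt_one (by positivity)).2 (by linarith)⟩)
    (fun x hx ↦ div_pos hx.1 (sub_pos.2 hx.2))
  · have : 1 + t ≠ 0 := by positivity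
    field_simp
    ring
  · have : 1 - x ≠ 0 := (sub_pos.2 hx.2).ne'
    field_simp
    ring

theorem ProbabilityTheory.beta_one_sub (p : ℝ) :
    ProbabilityTheory.beta p (1 - p) = π / sin (π * p) := by
  rw [ProbabilityTheory.beta, add_sub_cancel, Real.Gamma_one, div_one,
    Real.Gamma_mul_Gamma_one_sub]

theorem integral_Ioi_rpow_div_one_add {p : ℝ} (hp₀ : 0 < p) (hp₁ : p < 1) :
    IntegrableOn (fun t : ℝ ↦ t ^ (p - 1) / (1 + t)) (Ioi 0) ∧
      ∫ t in Ioi (0 : ℝ), t ^ (p - 1) / (1 + t) = π / sin (π * p) := by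
  set g : ℝ → ℝ := fun x ↦ x ^ (p - 1) * (1 - x) ^ ((1 - p) - 1)
  have hderiv : ∀ t ∈ Ioi (0 : ℝ),
      HasDerivWithinAt (fun t ↦ t / (1 + t)) (((1 + t) ^ 2)⁻¹) (Ioi 0) t := by
    intro t (ht : 0 < t)
    have h : HasDerivAt (fun t ↦ t / (1 + t)) ((1 * (1 + t) - t * 1) / (1 + t) ^ 2) t :=
      (hasDerivAt_id' t).div ((hasDerivAt_id' t).const_add 1) (by positivity)
    exact h.hasDerivWithinAt.congr_deriv (by field_simp; ring)
  have hsubst : ∀ t ∈ Ioi (0 : ℝ),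
      |((1 + t) ^ 2)⁻¹| • g (t / (1 + t)) = t ^ (p - 1) / (1 + t) := by
    intro t (ht : 0 < t)
    have h1t : 0 < 1 + t := by positivity
    have hcompl : 1 - t / (1 + t) = (1 + t)⁻¹ := by field_simp; ring
    simp only [g, smul_eq_mul, abs_of_pos (inv_pos.2 (pow_pos h1t 2)), hcompl,
      div_rpow ht.le h1t.le, inv_rpow h1t.le, ← rpow_neg h1t.le]
    rw [show -(1 - p - 1) = (p - 1) + 1 by ring, rpow_add h1t, rpow_one]
    field_simp
  obtain ⟨hint, hval⟩ := integral_Ioo_rpow_mul_one_sub_rpow hp₀ (sub_pos.2 hp₁)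
  rw [← bijOn_div_one_add.image_eq] at hint hval
  refine ⟨?_, ?_⟩
  · exact ((integrableOn_image_iff_integrableOn_abs_deriv_smul measurableSet_Ioi hderiv
      bijOn_div_one_add.injOn g).1 hint).congr_fun hsubst measurableSet_Ioi
  · rw [← setIntegral_congr_fun measurableSet_Ioi hsubst,
      ← integral_image_eq_integral_abs_deriv_smul measurableSet_Ioi hderiv
        bijOn_div_one_add.injOn g, hval, ProbabilityTheory.beta_one_sub]

theorem integral_Ioi_rpow_div_one_add_sq {a : ℝ} (ha₀ : 0 < a) (ha₂ : a < 2) :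
    IntegrableOn (fun u : ℝ ↦ u ^ (a - 1) / (1 + u ^ 2)) (Ioi 0) ∧
      ∫ u in Ioi (0 : ℝ), u ^ (a - 1) / (1 + u ^ 2) = π / (2 * sin (π * a / 2)) := by
  set g : ℝ → ℝ := fun t ↦ t ^ (a / 2 - 1) / (1 + t)
  have hsubst : ∀ u ∈ Ioi (0 : ℝ), (|(2 : ℝ)| * u ^ ((2 : ℝ) - 1)) • g (u ^ (2 : ℝ)) =
      2 * (u ^ (a - 1) / (1 + u ^ 2)) := by
    intro u (hu : 0 < u)
    have hpow : u ^ ((2 : ℝ) - 1) * (u ^ (2 : ℝ)) ^ (a / 2 - 1) = u ^ (a - 1) := by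
      rw [← rpow_mul hu.le, ← rpow_add hu]
      ring_nf
    simp only [g, smul_eq_mul, abs_two]
    rw [mul_assoc, ← mul_div_assoc, hpow, rpow_two]
  obtain ⟨hint, hval⟩ := integral_Ioi_rpow_div_one_add (p := a / 2) (by positivity) (by linarith)
  rw [← integrableOn_Ioi_comp_rpow_iff g two_ne_zero] at hint
  rw [← integral_comp_rpow_Ioi g two_ne_zero] at hval
  refine ⟨?_, ?_⟩
  · exact IntegrableOn.congr_fun ((hint.congr_fun hsubst measurableSet_Ioi).const_mul 2⁻¹)
      (fun u _ ↦ inv_mul_cancel_left₀ two_ne_zero _) measurableSet_Ioi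
  · rw [setIntegral_congr_fun measurableSet_Ioi hsubst, integral_const_mul] at hval
    rw [mul_div_assoc, mul_comm 2, ← div_div, ← hval]
    ring

theorem integral_Ioi_rpow_div_one_add_mul_sq {a c : ℝ} (ha₀ : 0 < a) (ha₂ : a < 2) (hc : 0 < c) :
    IntegrableOn (fun s : ℝ ↦ s ^ (a - 1) / (1 + (c * s) ^ 2)) (Ioi 0) ∧
      ∫ s in Ioi (0 : ℝ), s ^ (a - 1) / (1 + (c * s) ^ 2) =
        c ^ (-a) * (π / (2 * sin (π * a / 2))) := by
  set h : ℝ → ℝ := fun u ↦ u ^ (a - 1) / (1 + u ^ 2)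
  have hscale :
      ∀ s ∈ Ioi (0 : ℝ), c ^ (1 - a) * h (c * s) = s ^ (a - 1) / (1 + (c * s) ^ 2) := by
    intro s (hs : 0 < s)
    simp only [h, mul_rpow hc.le hs.le, ← mul_assoc, ← mul_div_assoc, ← rpow_add hc,
      sub_add_sub_cancel, sub_self, rpow_zero, one_mul]
  obtain ⟨hint, hval⟩ := integral_Ioi_rpow_div_one_add_sq ha₀ ha₂
  refine ⟨?_, ?_⟩
  · have hcomp := (integrableOn_Ioi_comp_mul_left_iff h 0 hc).2 (by rwa [mul_zero])
    exact IntegrableOn.congr_fun (hcomp.const_mul _) hscale measurableSet_Ioi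
  · rw [← setIntegral_congr_fun measurableSet_Ioi hscale, integral_const_mul,
      integral_comp_mul_left_Ioi h 0 hc, mul_zero, hval, smul_eq_mul, ← mul_assoc,
      ← rpow_neg_one, ← rpow_add hc]
    ring_nf

theorem rpow_mul_one_sub_le {a s : ℝ} (ha : a ≤ 1) (hs₀ : 0 < s) (hs : s ≤ 1 / 2) :
    (s * (1 - s)) ^ (a - 1) ≤ 2 ^ (1 - a) * s ^ (a - 1) := by
  have h : (1 - s) ^ (a - 1) ≤ (1 / 2) ^ (a - 1) :=
    rpow_le_rpow_of_nonpos (by norm_num) (by linarith) (by linarith)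
  rw [one_div, inv_rpow zero_le_two, ← rpow_neg zero_le_two, neg_sub] at h
  rw [mul_rpow hs₀.le (by linarith), mul_comm]
  exact mul_le_mul_of_nonneg_right h (rpow_nonneg hs₀.le _)

theorem integral_Ioo_rpow_mul_one_sub_div_one_add_mul_sq_le {a c : ℝ} (ha₀ : 0 < a) (ha₁ : a ≤ 1)
    (hc : 0 < c) :
    ∫ s in Ioo (0 : ℝ) (1 / 2), (s * (1 - s)) ^ (a - 1) / (1 + (c * s) ^ 2) ≤
      2 ^ (1 - a) * (c ^ (-a) * (π / (2 * sin (π * a / 2)))) := by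
  obtain ⟨hint, hval⟩ := integral_Ioi_rpow_div_one_add_mul_sq ha₀ (by linarith) hc
  have hmaj := hint.const_mul (2 ^ (1 - a))
  calc ∫ s in Ioo (0 : ℝ) (1 / 2), (s * (1 - s)) ^ (a - 1) / (1 + (c * s) ^ 2)
      ≤ ∫ s in Ioo (0 : ℝ) (1 / 2), 2 ^ (1 - a) * (s ^ (a - 1) / (1 + (c * s) ^ 2)) := by
        refine integral_mono_of_nonneg ?_ (IntegrableOn.mono_set hmaj fun s hs ↦ hs.1) ?_
        all_goals filter_upwards [ae_restrict_mem measurableSet_Ioo] with s ⟨hs₀, hs⟩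
        · have : 0 ≤ 1 - s := by linarith
          positivity
        · rw [← mul_div_assoc]
          gcongr
          exact rpow_mul_one_sub_le ha₁ hs₀ hs.le
    _ ≤ ∫ s in Ioi (0 : ℝ), 2 ^ (1 - a) * (s ^ (a - 1) / (1 + (c * s) ^ 2)) := by
        refine setIntegral_mono_set hmaj ?_ (Filter.Eventually.of_forall fun s hs ↦ hs.1)
        filter_upwards [ae_restrict_mem measurableSet_Ioi] with s (hs : 0 < s)
        positivity
    _ = 2 ^ (1 - a) * (c ^ (-a) * (π / (2 * sin (π * a / 2)))) := by
        rw [integral_const_mul, hval]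

theorem cos_pi_mul_sub_one_div_two_mul {x : ℝ} (hx : x ≠ 0) :
    cos (π * (x - 1) / (2 * x)) = sin (π * x⁻¹ / 2) := by
  rw [← cos_pi_div_two_sub]
  congr 1
  field_simp

/-- Kernel integral bound:
`∫₀^(1/2) (s(1−s))^((1−k)/k) |w| / (1 + μ^(2k)|w|^(2k) s²) ds
  ≤ (2^((k−1)/k)/μ) · π/(2 cos(π(k−1)/(2k)))`, uniformly in `w ∈ ℂ`. -/
theorem stmt_5 (k : ℕ) (hk : 1 ≤ k) (μ : ℝ) (hμ : 0 < μ) (w : ℂ) :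
    (∫ s in Ioo (0 : ℝ) (1 / 2),
        (s * (1 - s)) ^ (((1 : ℝ) - k) / k) * ‖w‖ / (1 + μ ^ (2 * k) * ‖w‖ ^ (2 * k) * s ^ 2))
      ≤ ((2 : ℝ) ^ (((k : ℝ) - 1) / k) / μ) * (π / (2 * Real.cos (π * ((k : ℝ) - 1) / (2 * k)))) := by
  have hk₀ : (0 : ℝ) < k := by exact_mod_cast hk
  set a : ℝ := (k : ℝ)⁻¹ with ha
  have ha₀ : 0 < a := inv_pos.2 hk₀
  have ha₁ : a ≤ 1 := inv_le_one_of_one_le₀ (by exact_mod_cast hk)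
  have hexp : ((1 : ℝ) - k) / k = a - 1 := by rw [ha]; field_simp
  have hI : 0 < π / (2 * sin (π * a / 2)) := by
    have : 0 < sin (π * a / 2) := sin_pos_of_pos_of_lt_pi (by positivity) (by nlinarith [pi_pos])
    positivity
  rw [show ((k : ℝ) - 1) / k = 1 - a by rw [ha]; field_simp,
    cos_pi_mul_sub_one_div_two_mul hk₀.ne', ← ha]
  rcases eq_or_ne w 0 with rfl | hw
  · simp only [norm_zero, mul_zero, zero_div, integral_zero]
    exact mul_nonneg (by positivity) hI.le
  set c : ℝ := (μ * ‖w‖) ^ k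
  have hc : 0 < c := by positivity
  have hca : c ^ (-a) = (μ * ‖w‖)⁻¹ := by
    rw [show c = (μ * ‖w‖) ^ (k : ℝ) from (rpow_natCast _ _).symm, ← rpow_mul (by positivity),
      mul_neg, mul_inv_cancel₀ hk₀.ne', rpow_neg_one]
  calc _ = ‖w‖ * ∫ s in Ioo (0 : ℝ) (1 / 2), (s * (1 - s)) ^ (a - 1) / (1 + (c * s) ^ 2) := by
        rw [← integral_const_mul, hexp]
        congr with s
        ring
    _ ≤ ‖w‖ * (2 ^ (1 - a) * (c ^ (-a) * (π / (2 * sin (π * a / 2))))) := by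
        gcongr
        exact integral_Ioo_rpow_mul_one_sub_div_one_add_mul_sq_le ha₀ ha₁ hc
    _ = _ := by
        rw [hca]
        field_simp
end

section
/- Laplace transform of order k takes the order-k convolution to the pointwise product: for continuous H, J on [0,∞) with |H(w)|, |J(w)| ≤ C e^{μ^k w^k}/(1 + μ^{2k}w^{2k}), and for real x > 0 with x < μ^{-1}, one has ∫₀^∞ (H⋆ₖJ)(p) e^{-p^k/x^k} k dp = (∫₀^∞ H(w) e^{-w^k/x^k} k dw)·(∫₀^∞ J(u) e^{-u^k/x^k} k du), where (H⋆ₖJ)(p) = p∫₀¹ (s(1−s))^{(1−k)/k} H(p(1−s)^{1/k}) J(p s^{1/k}) ds. -/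
/-!
The substitution `w = p (1 - s)^{1/k}`, `u = p s^{1/k}` maps `(0, ∞) × (0, 1)` bijectively onto
the quadrant `(0, ∞)²`, with Jacobian `(p / k) (s (1 - s))^{(1 - k)/k}` and `w^k + u^k = p^k`, so
`e^{-w^k/x^k} e^{-u^k/x^k} = e^{-p^k/x^k}`. The product of the two Laplace integrals is a double
integral over the quadrant; after the substitution, Fubini in `(p, s)` turns it into the Laplace
integral of the convolution. Fubini applies because for `x < μ⁻¹` the integrands are dominated by
`C k e^{-(x^{-k} - μ^k) w^k}`.
-/

open Real Set MeasureTheory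

noncomputable def convMap (k : ℕ) (q : ℝ × ℝ) : ℝ × ℝ :=
  (q.1 * (1 - q.2) ^ ((1 : ℝ) / k), q.1 * q.2 ^ ((1 : ℝ) / k))

noncomputable def convMapFDeriv (k : ℕ) (q : ℝ × ℝ) : ℝ × ℝ →L[ℝ] ℝ × ℝ :=
  LinearMap.toContinuousLinearMap
    (Matrix.toLin (Module.Basis.finTwoProd ℝ) (Module.Basis.finTwoProd ℝ)
      !![(1 - q.2) ^ ((1 : ℝ) / k), -(q.1 * (1 / k * (1 - q.2) ^ ((1 : ℝ) / k - 1)));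
         q.2 ^ ((1 : ℝ) / k), q.1 * (1 / k * q.2 ^ ((1 : ℝ) / k - 1))])

theorem hasFDerivAt_convMap (k : ℕ) {q : ℝ × ℝ} (hq : q.2 ∈ Ioo (0 : ℝ) 1) :
    HasFDerivAt (convMap k) (convMapFDeriv k q) q := by
  have h1s : 1 - q.2 ≠ 0 := by linarith [hq.2]
  have hfst := (Real.hasDerivAt_rpow_const (p := (1 : ℝ) / k) (Or.inl h1s)).comp q.2
    ((hasDerivAt_id q.2).const_sub 1)
  have hsnd := Real.hasDerivAt_rpow_const (x := q.2) (p := (1 : ℝ) / k) (Or.inl hq.1.ne')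
  refine HasFDerivAt.congr_fderiv (f := convMap k)
    ((hasFDerivAt_fst.mul (hfst.comp_hasFDerivAt q hasFDerivAt_snd)).prodMk
      (hasFDerivAt_fst.mul (hsnd.comp_hasFDerivAt q hasFDerivAt_snd))) ?_
  rw [convMapFDeriv, Matrix.toLin_finTwoProd_toContinuousLinearMap]
  ext <;> simp

theorem det_convMapFDeriv {k : ℕ} (hk : k ≠ 0) {q : ℝ × ℝ} (hq : q.2 ∈ Ioo (0 : ℝ) 1) :
    (convMapFDeriv k q).det = q.1 / k * (q.2 * (1 - q.2)) ^ (((1 : ℝ) - k) / k) := by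
  obtain ⟨p, s⟩ := q
  have hs : 0 < s := hq.1
  have h1s : 0 < 1 - s := by linarith [hq.2]
  have hexp : ((1 : ℝ) - k) / k = 1 / k - 1 := by field_simp
  have hsplit : ∀ {t : ℝ}, 0 < t → t ^ ((1 : ℝ) / k) = t ^ ((1 : ℝ) / k - 1) * t := fun ht => by
    rw [← Real.rpow_add_one ht.ne', sub_add_cancel]
  rw [convMapFDeriv, LinearMap.det_toContinuousLinearMap, LinearMap.det_toLin,
    Matrix.det_fin_two_of, hexp, Real.mul_rpow hs.le h1s.le, hsplit hs, hsplit h1s]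
  ring

theorem convMap_fst_pow {k : ℕ} (hk : k ≠ 0) {q : ℝ × ℝ} (hq : q.2 ≤ 1) :
    (convMap k q).1 ^ k = q.1 ^ k * (1 - q.2) := by
  rw [convMap, mul_pow, one_div, Real.rpow_inv_natCast_pow (by linarith) hk]

theorem convMap_snd_pow {k : ℕ} (hk : k ≠ 0) {q : ℝ × ℝ} (hq : 0 ≤ q.2) :
    (convMap k q).2 ^ k = q.1 ^ k * q.2 := by
  rw [convMap, mul_pow, one_div, Real.rpow_inv_natCast_pow hq hk]

theorem injOn_convMap {k : ℕ} (hk : k ≠ 0) : InjOn (convMap k) (Ioi 0 ×ˢ Ioo 0 1) := by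
  rintro ⟨p, s⟩ ⟨hp, hs⟩ ⟨p', s'⟩ ⟨hp', hs'⟩ h
  have h1 := congrArg (fun z => z.1 ^ k) h
  have h2 := congrArg (fun z => z.2 ^ k) h
  simp only [convMap_fst_pow hk hs.2.le, convMap_fst_pow hk hs'.2.le,
    convMap_snd_pow hk hs.1.le, convMap_snd_pow hk hs'.1.le] at h1 h2
  have hpk : p ^ k = p' ^ k := by linarith
  have hpp : p = p' := (pow_left_strictMonoOn₀ hk).injOn (le_of_lt hp) (le_of_lt hp') hpk
  subst hpp
  rw [Prod.mk.injEq]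
  exact ⟨rfl, mul_left_cancel₀ (pow_ne_zero k (ne_of_gt hp)) h2⟩

theorem image_convMap {k : ℕ} (hk : k ≠ 0) :
    convMap k '' (Ioi 0 ×ˢ Ioo 0 1) = Ioi 0 ×ˢ Ioi 0 := by
  refine Subset.antisymm ?_ fun ⟨w, u⟩ ⟨hw, hu⟩ => ?_
  · rintro _ ⟨⟨p, s⟩, ⟨hp, hs⟩, rfl⟩
    have h1s : (0 : ℝ) < 1 - s := by linarith [hs.2]
    exact ⟨mul_pos hp (Real.rpow_pos_of_pos h1s _), mul_pos hp (Real.rpow_pos_of_pos hs.1 _)⟩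
  have hw : 0 < w := hw
  have hu : 0 < u := hu
  -- the preimage of `(w, u)` has `p ^ k = w ^ k + u ^ k` and `s = u ^ k / p ^ k`
  set P := w ^ k + u ^ k
  have hP : 0 < P := by positivity
  have hroot : ∀ {t : ℝ}, 0 < t → P ^ ((1 : ℝ) / k) * (t ^ k / P) ^ ((1 : ℝ) / k) = t :=
    fun ht => by
      rw [← Real.mul_rpow hP.le (by positivity), mul_div_cancel₀ _ hP.ne', one_div,
        Real.pow_rpow_inv_natCast ht.le hk]
  refine ⟨(P ^ ((1 : ℝ) / k), u ^ k / P), ⟨Real.rpow_pos_of_pos hP _, by positivity, ?_⟩, ?_⟩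
  · rw [div_lt_one hP]; simp only [P]; linarith [pow_pos hw k]
  · have h1 : 1 - u ^ k / P = w ^ k / P := by field_simp; ring
    simp only [convMap, h1, hroot hw, hroot hu]

section ChangeOfVariables

variable {E : Type*} [NormedAddCommGroup E] [NormedSpace ℝ E] {k : ℕ}

theorem abs_det_convMapFDeriv (hk : k ≠ 0) {q : ℝ × ℝ}
    (hq : q ∈ Ioi (0 : ℝ) ×ˢ Ioo (0 : ℝ) 1) :
    |(convMapFDeriv k q).det| = q.1 / k * (q.2 * (1 - q.2)) ^ (((1 : ℝ) - k) / k) := by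
  have h1s : 0 < 1 - q.2 := by linarith [hq.2.2]
  rw [det_convMapFDeriv hk hq.2, abs_of_pos]
  exact mul_pos (div_pos hq.1 (Nat.cast_pos.2 (Nat.pos_of_ne_zero hk)))
    (Real.rpow_pos_of_pos (mul_pos hq.2.1 h1s) _)

theorem integrableOn_convMap_iff (hk : k ≠ 0) (G : ℝ × ℝ → E) :
    IntegrableOn G (Ioi 0 ×ˢ Ioi 0) ↔ IntegrableOn
      (fun q : ℝ × ℝ => (q.1 / k * (q.2 * (1 - q.2)) ^ (((1 : ℝ) - k) / k)) • G (convMap k q))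
      (Ioi 0 ×ˢ Ioo 0 1) := by
  have hT := (measurableSet_Ioi (a := (0 : ℝ))).prod (measurableSet_Ioo (a := (0 : ℝ)) (b := 1))
  rw [← image_convMap hk, integrableOn_image_iff_integrableOn_abs_det_fderiv_smul volume hT
    (fun q hq => (hasFDerivAt_convMap k hq.2).hasFDerivWithinAt) (injOn_convMap hk)]
  exact integrableOn_congr_fun (fun q hq => by rw [abs_det_convMapFDeriv hk hq]) hT

theorem setIntegral_Ioi_prod_Ioi_eq_convMap (hk : k ≠ 0) (G : ℝ × ℝ → E) :
    ∫ z in Ioi (0 : ℝ) ×ˢ Ioi (0 : ℝ), G z = ∫ q in Ioi (0 : ℝ) ×ˢ Ioo (0 : ℝ) 1,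
      (q.1 / k * (q.2 * (1 - q.2)) ^ (((1 : ℝ) - k) / k)) • G (convMap k q) := by
  have hT := (measurableSet_Ioi (a := (0 : ℝ))).prod (measurableSet_Ioo (a := (0 : ℝ)) (b := 1))
  rw [← image_convMap hk, integral_image_eq_integral_abs_det_fderiv_smul volume hT
    (fun q hq => (hasFDerivAt_convMap k hq.2).hasFDerivWithinAt) (injOn_convMap hk)]
  exact setIntegral_congr_fun hT fun q hq => by rw [abs_det_convMapFDeriv hk hq]

end ChangeOfVariables

noncomputable def laplaceIntegrand (k : ℕ) (x : ℝ) (f : ℝ → ℂ) (w : ℝ) : ℂ :=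
  f w * Complex.exp (-((w : ℂ) ^ k / (x : ℂ) ^ k)) * k

theorem integrableOn_laplaceIntegrand {k : ℕ} (hk : k ≠ 0) {f : ℝ → ℂ} {b C x : ℝ}
    (hf : ContinuousOn f (Ici 0)) (hbound : ∀ w, 0 < w → ‖f w‖ ≤ C * exp (b * w ^ k))
    (hx : 0 < x) (hbx : b * x ^ k < 1) :
    IntegrableOn (laplaceIntegrand k x f) (Ioi 0) := by
  have hc : 0 < 1 / x ^ k - b := by
    rw [sub_pos, lt_div_iff₀ (by positivity)]
    exact hbx
  have hdom : IntegrableOn (fun w : ℝ => C * k * exp (-(1 / x ^ k - b) * w ^ k)) (Ioi 0) := by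
    have := integrableOn_rpow_mul_exp_neg_mul_rpow (s := 0) (p := k) (by norm_num)
      (by positivity) hc
    simp only [Real.rpow_zero, one_mul, Real.rpow_natCast] at this
    exact this.const_mul _
  refine hdom.mono' ?_ ?_
  · refine ContinuousOn.aestronglyMeasurable ?_ measurableSet_Ioi
    exact ((hf.mono Ioi_subset_Ici_self).mul (by fun_prop)).mul continuousOn_const
  rw [ae_restrict_iff' measurableSet_Ioi]
  refine Filter.Eventually.of_forall fun w hw => ?_
  have hexp : ‖Complex.exp (-((w : ℂ) ^ k / (x : ℂ) ^ k))‖ = exp (-(w ^ k / x ^ k)) := by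
    rw [Complex.norm_exp]; norm_cast
  calc ‖laplaceIntegrand k x f w‖ = ‖f w‖ * exp (-(w ^ k / x ^ k)) * k := by
        rw [laplaceIntegrand, norm_mul, norm_mul, hexp, Complex.norm_natCast]
    _ ≤ C * exp (b * w ^ k) * exp (-(w ^ k / x ^ k)) * k := by gcongr; exact hbound w hw
    _ = C * k * exp (-(1 / x ^ k - b) * w ^ k) := by
        rw [mul_assoc C, ← exp_add, mul_right_comm]; congr 2; ring

theorem convMap_smul_laplaceIntegrand_mul {k : ℕ} (hk : k ≠ 0) (x : ℝ) (f g : ℝ → ℂ)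
    {q : ℝ × ℝ} (hq : q.2 ∈ Icc (0 : ℝ) 1) :
    (q.1 / k * (q.2 * (1 - q.2)) ^ (((1 : ℝ) - k) / k)) •
        (laplaceIntegrand k x f (convMap k q).1 * laplaceIntegrand k x g (convMap k q).2) =
      ((q.2 * (1 - q.2)) ^ (((1 : ℝ) - k) / k) : ℝ) • (f (convMap k q).1 * g (convMap k q).2) *
        ((q.1 : ℂ) * Complex.exp (-((q.1 : ℂ) ^ k / (x : ℂ) ^ k)) * k) := by
  have hpow : ((convMap k q).1 : ℂ) ^ k + ((convMap k q).2 : ℂ) ^ k = (q.1 : ℂ) ^ k := by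
    exact_mod_cast (show (convMap k q).1 ^ k + (convMap k q).2 ^ k = q.1 ^ k by
      rw [convMap_fst_pow hk hq.2, convMap_snd_pow hk hq.1]; ring)
  have hkC : (k : ℂ) ≠ 0 := Nat.cast_ne_zero.2 hk
  rw [← hpow, add_div, neg_add, Complex.exp_add]
  simp only [laplaceIntegrand, Complex.real_smul]
  push_cast
  field_simp

theorem stmt_9_general (k : ℕ) (hk : 1 ≤ k) (μ C : ℝ) (hC : 0 < C)
    (H J : ℝ → ℂ) (hHc : ContinuousOn H (Ici 0)) (hJc : ContinuousOn J (Ici 0))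
    (hH : ∀ w : ℝ, 0 ≤ w →
      ‖H w‖ ≤ C * Real.exp (μ ^ k * w ^ k) / (1 + μ ^ (2 * k) * w ^ (2 * k)))
    (hJ : ∀ w : ℝ, 0 ≤ w →
      ‖J w‖ ≤ C * Real.exp (μ ^ k * w ^ k) / (1 + μ ^ (2 * k) * w ^ (2 * k)))
    (x : ℝ) (hx : 0 < x) (hxμ : x < μ⁻¹) :
    (∫ p in Ioi (0 : ℝ),
        ((p : ℂ) * ∫ s in Ioo (0 : ℝ) 1,
            ((s * (1 - s)) ^ (((1 : ℝ) - k) / k) : ℝ) •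
              (H (p * (1 - s) ^ ((1 : ℝ) / k)) * J (p * s ^ ((1 : ℝ) / k))))
          * Complex.exp (-((p : ℂ) ^ k / (x : ℂ) ^ k)) * k)
      = (∫ w in Ioi (0 : ℝ), H w * Complex.exp (-((w : ℂ) ^ k / (x : ℂ) ^ k)) * k) *
        (∫ u in Ioi (0 : ℝ), J u * Complex.exp (-((u : ℂ) ^ k / (x : ℂ) ^ k)) * k) := by
  have hk0 : k ≠ 0 := Nat.one_le_iff_ne_zero.1 hk
  have hμ : 0 < μ := inv_pos.1 (hx.trans hxμ)
  have hμx : μ ^ k * x ^ k < 1 := by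
    rw [← mul_pow]
    refine pow_lt_one₀ (by positivity) ?_ hk0
    simpa [hμ.ne'] using mul_lt_mul_of_pos_left hxμ hμ
  have hbound : ∀ f : ℝ → ℂ, (∀ w : ℝ, 0 ≤ w →
      ‖f w‖ ≤ C * exp (μ ^ k * w ^ k) / (1 + μ ^ (2 * k) * w ^ (2 * k))) →
      ∀ w : ℝ, 0 < w → ‖f w‖ ≤ C * exp (μ ^ k * w ^ k) := fun f hf w hw =>
    (hf w hw.le).trans (div_le_self (by positivity) (le_add_of_nonneg_right (by positivity)))
  have hprod : IntegrableOn
      (fun z : ℝ × ℝ => laplaceIntegrand k x H z.1 * laplaceIntegrand k x J z.2)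
      (Ioi 0 ×ˢ Ioi 0) := by
    rw [IntegrableOn, Measure.volume_eq_prod, ← Measure.prod_restrict]
    exact (integrableOn_laplaceIntegrand hk0 hHc (hbound H hH) hx hμx).mul_prod
      (integrableOn_laplaceIntegrand hk0 hJc (hbound J hJ) hx hμx)
  have hT := (measurableSet_Ioi (a := (0 : ℝ))).prod (measurableSet_Ioo (a := (0 : ℝ)) (b := 1))
  have hpointwise : ∀ q ∈ Ioi (0 : ℝ) ×ˢ Ioo (0 : ℝ) 1, _ := fun q hq =>
    convMap_smul_laplaceIntegrand_mul hk0 x H J (Ioo_subset_Icc_self hq.2)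
  have hF := ((integrableOn_convMap_iff hk0 _).1 hprod).congr_fun hpointwise hT
  rw [IntegrableOn, Measure.volume_eq_prod] at hF
  symm
  calc _ = ∫ z in Ioi (0 : ℝ) ×ˢ Ioi (0 : ℝ),
        laplaceIntegrand k x H z.1 * laplaceIntegrand k x J z.2 := by
        rw [Measure.volume_eq_prod, setIntegral_prod_mul]; rfl
    _ = _ := setIntegral_Ioi_prod_Ioi_eq_convMap hk0 _
    _ = _ := setIntegral_congr_fun hT hpointwise
    _ = _ := by rw [Measure.volume_eq_prod, setIntegral_prod _ hF]
    _ = _ := setIntegral_congr_fun measurableSet_Ioi fun p _ => by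
        simp only [convMap]
        rw [integral_mul_const]
        ring

/-- The order-`k` Laplace transform takes the order-`k` convolution to the product:
`L_k(H ⋆ₖ J)(x) = L_k(H)(x) · L_k(J)(x)` for `0 < x < μ⁻¹`. -/
theorem stmt_9 (k : ℕ) (hk : 1 ≤ k) (μ C : ℝ) (hμ : 0 < μ) (hC : 0 < C)
    (H J : ℝ → ℂ) (hHc : ContinuousOn H (Ici 0)) (hJc : ContinuousOn J (Ici 0))
    (hH : ∀ w : ℝ, 0 ≤ w →
      ‖H w‖ ≤ C * Real.exp (μ ^ k * w ^ k) / (1 + μ ^ (2 * k) * w ^ (2 * k)))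
    (hJ : ∀ w : ℝ, 0 ≤ w →
      ‖J w‖ ≤ C * Real.exp (μ ^ k * w ^ k) / (1 + μ ^ (2 * k) * w ^ (2 * k)))
    (x : ℝ) (hx : 0 < x) (hxμ : x < μ⁻¹) :
    (∫ p in Ioi (0 : ℝ),
        ((p : ℂ) * ∫ s in Ioo (0 : ℝ) 1,
            ((s * (1 - s)) ^ (((1 : ℝ) - k) / k) : ℝ) •
              (H (p * (1 - s) ^ ((1 : ℝ) / k)) * J (p * s ^ ((1 : ℝ) / k))))
          * Complex.exp (-((p : ℂ) ^ k / (x : ℂ) ^ k)) * k)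
      = (∫ w in Ioi (0 : ℝ), H w * Complex.exp (-((w : ℂ) ^ k / (x : ℂ) ^ k)) * k) *
        (∫ u in Ioi (0 : ℝ), J u * Complex.exp (-((u : ℂ) ^ k / (x : ℂ) ^ k)) * k) :=
  stmt_9_general k hk μ C hC H J hHc hJc hH hJ x hx hxμ
end

section
/- Differentiation identity for the order-k Laplace transform: if H : (0,∞) → ℂ is continuous with |H(w)| ≤ C e^{μ^k w^k} and x ∈ (0, μ^{-1}), then (1/k)·x^{k+1}·d/dx [∫₀^∞ H(w)e^{-w^k/x^k} k dw] = ∫₀^∞ w^k H(w) e^{-w^k/x^k} k dw. -/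
/-!
Differentiate under the integral sign. For `y` in an interval `(δ, b)` with `0 < δ < x < b < μ⁻¹`,
the `y`-derivative of the integrand, `(k w^k / y^(k+1)) H(w) e^(-w^k/y^k) k`, is bounded by a
constant times `w^k e^(-(b^(-k) - μ^k) w^k)`, which is integrable on `(0, ∞)` because `b < μ⁻¹`.
-/

open Real Set MeasureTheory Filter

noncomputable def laplaceTransform (k : ℕ) (H : ℝ → ℂ) (y : ℝ) : ℂ :=
  ∫ w in Ioi (0 : ℝ), H w * Complex.exp (-((w : ℂ) ^ k / (y : ℂ) ^ k)) * k

theorem hasDerivAt_cexp_neg_pow_div_pow (k : ℕ) (w : ℝ) {y : ℝ} (hy : y ≠ 0) :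
    HasDerivAt (fun y : ℝ => Complex.exp (-((w : ℂ) ^ k / (y : ℂ) ^ k)))
      (((k * w ^ k / y ^ (k + 1) : ℝ) : ℂ) * Complex.exp (-((w : ℂ) ^ k / (y : ℂ) ^ k))) y := by
  have hyC : (y : ℂ) ≠ 0 := by exact_mod_cast hy
  have h := (((hasDerivAt_const (y : ℂ) ((w : ℂ) ^ k)).div (hasDerivAt_pow k (y : ℂ))
    (pow_ne_zero k hyC)).neg.cexp).comp_ofReal
  refine h.congr_deriv ?_
  cases k with
  | zero => simp
  | succ n =>
    simp only [Pi.neg_apply, Pi.div_apply, Nat.add_sub_cancel]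
    push_cast
    field_simp
    ring

theorem norm_cexp_neg_pow_div_pow (k : ℕ) (w y : ℝ) :
    ‖Complex.exp (-((w : ℂ) ^ k / (y : ℂ) ^ k))‖ = rexp (-(w ^ k / y ^ k)) := by
  rw [← Complex.norm_exp_ofReal]
  push_cast
  rfl

theorem integrableOn_pow_mul_exp_neg_mul_pow {k : ℕ} (hk : 1 ≤ k) (n : ℕ) {c : ℝ} (hc : 0 < c) :
    IntegrableOn (fun w : ℝ => w ^ n * rexp (-c * w ^ k)) (Ioi 0) := by
  have h := integrableOn_rpow_mul_exp_neg_mul_rpow (s := n) (p := k)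
    (by linarith [n.cast_nonneg (α := ℝ)]) (by exact_mod_cast hk) hc
  simpa only [rpow_natCast] using h

theorem norm_mul_cexp_neg_pow_div_pow_le {k : ℕ} {μ C : ℝ} {H : ℝ → ℂ}
    (hH : ∀ w : ℝ, 0 < w → ‖H w‖ ≤ C * rexp (μ ^ k * w ^ k)) {w y b : ℝ} (hw : 0 < w)
    (hy : 0 < y) (hyb : y ≤ b) :
    ‖H w * Complex.exp (-((w : ℂ) ^ k / (y : ℂ) ^ k))‖ ≤ C * rexp (-(b⁻¹ ^ k - μ ^ k) * w ^ k) := by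
  have hkernel : rexp (-(w ^ k / y ^ k)) ≤ rexp (-(w ^ k / b ^ k)) :=
    exp_le_exp.mpr <| neg_le_neg <| div_le_div_of_nonneg_left (by positivity) (by positivity)
      (pow_le_pow_left₀ hy.le hyb k)
  calc ‖H w * Complex.exp (-((w : ℂ) ^ k / (y : ℂ) ^ k))‖
      = ‖H w‖ * rexp (-(w ^ k / y ^ k)) := by rw [norm_mul, norm_cexp_neg_pow_div_pow]
    _ ≤ C * rexp (μ ^ k * w ^ k) * rexp (-(w ^ k / b ^ k)) :=
      mul_le_mul (hH w hw) hkernel (exp_pos _).le ((norm_nonneg _).trans (hH w hw))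
    _ = C * rexp (-(b⁻¹ ^ k - μ ^ k) * w ^ k) := by
      rw [mul_assoc, ← exp_add, inv_pow]
      ring_nf

theorem inv_pow_sub_pow_pos {k : ℕ} (hk : 1 ≤ k) {μ y : ℝ} (hy : 0 < y) (hyμ : y < μ⁻¹) :
    0 < y⁻¹ ^ k - μ ^ k := by
  have hμ : 0 < μ := inv_pos.mp (hy.trans hyμ)
  exact sub_pos.mpr <| pow_lt_pow_left₀ ((lt_inv_comm₀ hy hμ).mp hyμ) hμ.le (by omega)

section LaplaceTransform

variable {k : ℕ} {μ C : ℝ} {H : ℝ → ℂ}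

theorem integrableOn_laplaceTransform_integrand (hk : 1 ≤ k) (hHc : ContinuousOn H (Ioi 0))
    (hH : ∀ w : ℝ, 0 < w → ‖H w‖ ≤ C * rexp (μ ^ k * w ^ k)) {x : ℝ} (hx : 0 < x)
    (hxμ : x < μ⁻¹) :
    IntegrableOn (fun w : ℝ => H w * Complex.exp (-((w : ℂ) ^ k / (x : ℂ) ^ k)) * k) (Ioi 0) := by
  refine ((integrableOn_pow_mul_exp_neg_mul_pow hk 0
    (inv_pow_sub_pow_pos hk hx hxμ)).const_mul (C * k)).mono'
    (ContinuousOn.aestronglyMeasurable (by fun_prop) measurableSet_Ioi)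
    ((ae_restrict_iff' measurableSet_Ioi).mpr (.of_forall fun w (hw : 0 < w) => ?_))
  rw [norm_mul, Complex.norm_natCast, pow_zero, one_mul, mul_right_comm]
  gcongr
  exact norm_mul_cexp_neg_pow_div_pow_le hH hw hx le_rfl

theorem norm_laplaceTransform_integrand_deriv_le
    (hH : ∀ w : ℝ, 0 < w → ‖H w‖ ≤ C * rexp (μ ^ k * w ^ k)) {w y δ b : ℝ} (hw : 0 < w)
    (hδ : 0 < δ) (hy : y ∈ Ioo δ b) :
    ‖((k * w ^ k / y ^ (k + 1) : ℝ) : ℂ) * (H w * Complex.exp (-((w : ℂ) ^ k / (y : ℂ) ^ k)) * k)‖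
      ≤ k * k / δ ^ (k + 1) * C * (w ^ k * rexp (-(b⁻¹ ^ k - μ ^ k) * w ^ k)) := by
  have hy0 : 0 < y := hδ.trans hy.1
  calc _ = k * w ^ k / y ^ (k + 1) *
        (‖H w * Complex.exp (-((w : ℂ) ^ k / (y : ℂ) ^ k))‖ * k) := by
        rw [norm_mul, norm_mul, Complex.norm_natCast, Complex.norm_real,
          norm_of_nonneg (by positivity)]
    _ ≤ k * w ^ k / δ ^ (k + 1) * (C * rexp (-(b⁻¹ ^ k - μ ^ k) * w ^ k) * k) := by
        gcongr
        exacts [hy.1.le, norm_mul_cexp_neg_pow_div_pow_le hH hw hy0 hy.2.le]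
    _ = _ := by ring

theorem hasDerivAt_laplaceTransform (hk : 1 ≤ k) (hHc : ContinuousOn H (Ioi 0))
    (hH : ∀ w : ℝ, 0 < w → ‖H w‖ ≤ C * rexp (μ ^ k * w ^ k)) {x : ℝ} (hx : 0 < x)
    (hxμ : x < μ⁻¹) :
    HasDerivAt (laplaceTransform k H)
      ((k / x ^ (k + 1) : ℂ) * laplaceTransform k (fun w => (w : ℂ) ^ k * H w) x) x := by
  obtain ⟨δ, hδ, hδx⟩ := exists_between hx
  obtain ⟨b, hxb, hbμ⟩ := exists_between hxμ
  set F' : ℝ → ℝ → ℂ := fun y w => ((k * w ^ k / y ^ (k + 1) : ℝ) : ℂ) *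
    (H w * Complex.exp (-((w : ℂ) ^ k / (y : ℂ) ^ k)) * k)
  have h_bound : ∀ᵐ w ∂(volume.restrict (Ioi 0)), ∀ y ∈ Ioo δ b,
      ‖F' y w‖ ≤ k * k / δ ^ (k + 1) * C * (w ^ k * rexp (-(b⁻¹ ^ k - μ ^ k) * w ^ k)) :=
    (ae_restrict_iff' measurableSet_Ioi).mpr <| .of_forall fun _ hw _ hy =>
      norm_laplaceTransform_integrand_deriv_le hH hw hδ hy
  have h_diff : ∀ᵐ w ∂(volume.restrict (Ioi 0)), ∀ y ∈ Ioo δ b, HasDerivAt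
      (fun y : ℝ => H w * Complex.exp (-((w : ℂ) ^ k / (y : ℂ) ^ k)) * k) (F' y w) y :=
    .of_forall fun w y hy =>
      (((hasDerivAt_cexp_neg_pow_div_pow k w (hδ.trans hy.1).ne').const_mul (H w)).mul_const
        (k : ℂ)).congr_deriv (by ring)
  have hD := (hasDerivAt_integral_of_dominated_loc_of_deriv_le
    (F := fun (y w : ℝ) => H w * Complex.exp (-((w : ℂ) ^ k / (y : ℂ) ^ k)) * k)
    (Ioo_mem_nhds hδx hxb)
    (.of_forall fun _ => ContinuousOn.aestronglyMeasurable (by fun_prop) measurableSet_Ioi)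
    (integrableOn_laplaceTransform_integrand hk hHc hH hx hxμ)
    (ContinuousOn.aestronglyMeasurable (by fun_prop) measurableSet_Ioi) h_bound
    ((integrableOn_pow_mul_exp_neg_mul_pow hk k
      (inv_pow_sub_pow_pos hk (hx.trans hxb) hbμ)).const_mul _) h_diff).2
  refine hD.congr_deriv ?_
  rw [laplaceTransform, ← integral_const_mul]
  congr 1 with w
  simp only [F']
  push_cast
  ring

end LaplaceTransform

theorem stmt_11_general (k : ℕ) (hk : 1 ≤ k) (μ C : ℝ)
    (H : ℝ → ℂ) (hHc : ContinuousOn H (Ioi 0))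
    (hH : ∀ w : ℝ, 0 < w → ‖H w‖ ≤ C * Real.exp (μ ^ k * w ^ k))
    (x : ℝ) (hx : 0 < x) (hxμ : x < μ⁻¹) :
    ∃ D : ℂ,
      HasDerivAt (fun y : ℝ =>
        ∫ w in Ioi (0 : ℝ), H w * Complex.exp (-((w : ℂ) ^ k / (y : ℂ) ^ k)) * k) D x ∧
      (1 / k : ℂ) * (x : ℂ) ^ (k + 1) * D
        = ∫ w in Ioi (0 : ℝ), (w : ℂ) ^ k * H w * Complex.exp (-((w : ℂ) ^ k / (x : ℂ) ^ k)) * k := by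
  have hxC : (x : ℂ) ≠ 0 := by exact_mod_cast hx.ne'
  have hkC : (k : ℂ) ≠ 0 := by exact_mod_cast (by omega : k ≠ 0)
  have hscale : (1 / k : ℂ) * (x : ℂ) ^ (k + 1) * (k / x ^ (k + 1)) = 1 := by field_simp
  refine ⟨_, hasDerivAt_laplaceTransform hk hHc hH hx hxμ, ?_⟩
  rw [← mul_assoc, hscale, one_mul, laplaceTransform]

/-- Differentiation identity for the order-`k` Laplace transform:
`(1/k) x^(k+1) d/dx [∫₀^∞ H(w) e^(-w^k/x^k) k dw] = ∫₀^∞ w^k H(w) e^(-w^k/x^k) k dw`. -/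
theorem stmt_11 (k : ℕ) (hk : 1 ≤ k) (μ C : ℝ) (hμ : 0 < μ) (hC : 0 < C)
    (H : ℝ → ℂ) (hHc : ContinuousOn H (Ioi 0))
    (hH : ∀ w : ℝ, 0 < w → ‖H w‖ ≤ C * Real.exp (μ ^ k * w ^ k))
    (x : ℝ) (hx : 0 < x) (hxμ : x < μ⁻¹) :
    ∃ D : ℂ,
      HasDerivAt (fun y : ℝ =>
        ∫ w in Ioi (0 : ℝ), H w * Complex.exp (-((w : ℂ) ^ k / (y : ℂ) ^ k)) * k) D x ∧
      (1 / k : ℂ) * (x : ℂ) ^ (k + 1) * D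
        = ∫ w in Ioi (0 : ℝ), (w : ℂ) ^ k * H w * Complex.exp (-((w : ℂ) ^ k / (x : ℂ) ^ k)) * k :=
  stmt_11_general k hk μ C H hHc hH x hx hxμ
end

section
/- The entire function H(w) = Σ_{m=1}^∞ w^{m−1}/Γ(m/k) satisfies the global bound |H(w)| ≤ 6k(1+|w|^{2k})e^{|w|^k} for all w ∈ ℂ. -/
/-!
Split the series at `m = 2k`. For `m < 2k` the argument `(m + 1) / k` lies in `(0, 2]`, where
`Γ ≥ 1/2` because the minimum of `Γ` on `(0, ∞)` sits at some `t₀ ∈ (1, 2)` and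
`t₀ Γ(t₀) = Γ(t₀ + 1) ≥ 1`; so each of these `2k` terms is at most `2 (1 + |w|^(2k))`.
For `m = 2k + j` with `j = kq + s`, `s < k`, monotonicity of `Γ` on `[2, ∞)` gives
`Γ((m + 1) / k) ≥ (q + 1)!`, while `|w|^m ≤ (1 + |w|^(2k)) (|w|^k)^(q + 1)`. Each value of `q`
occurs for exactly `k` indices `j`, so the tail is at most `k (1 + |w|^(2k)) (e^(|w|^k) - 1)`.
-/

open Real
open scoped Nat

namespace Real

theorem one_le_Gamma {t : ℝ} (ht : 2 ≤ t) : 1 ≤ Gamma t := by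
  simpa [Gamma_two] using Gamma_strictMonoOn_Ici.monotoneOn (le_refl (2 : ℝ)) ht ht

theorem one_half_le_Gamma {t : ℝ} (ht : 0 < t) : 1 / 2 ≤ Gamma t := by
  obtain ⟨t₀, ⟨ht₀, ht₀'⟩, hmin⟩ := exists_isMinOn_Gamma_Ioi
  have h : 1 ≤ t₀ * Gamma t₀ := by
    rw [← Gamma_add_one (by positivity)]
    exact one_le_Gamma (by linarith)
  have : 1 / 2 ≤ Gamma t₀ := by nlinarith [Gamma_pos_of_pos (zero_lt_one.trans ht₀)]
  exact this.trans (hmin ht)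

theorem factorial_le_Gamma {n : ℕ} {t : ℝ} (hn : 1 ≤ n) (ht : n + 1 ≤ t) :
    (n ! : ℝ) ≤ Gamma t := by
  have h2 : (2 : ℝ) ≤ n + 1 := by norm_cast; omega
  rw [← Gamma_nat_eq_factorial]
  exact Gamma_strictMonoOn_Ici.monotoneOn h2 (h2.trans ht) ht

end Real

theorem hasSum_comp_div {α : Type*} [AddCommMonoid α] [TopologicalSpace α] [ContinuousAdd α]
    {g : ℕ → α} {a : α} (hg : HasSum g a) (k : ℕ) [NeZero k] :
    HasSum (fun j ↦ g (j / k)) (k • a) := by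
  have hk : 0 < k := Nat.pos_of_neZero k
  have residue (i : Fin k) : HasSum (fun j ↦ if j % k = i then g (j / k) else 0) a := by
    have inj : Function.Injective (fun l ↦ l * k + i) := fun l l' h ↦ by
      simpa [hk.ne'] using h
    rw [← inj.hasSum_iff]
    · convert hg using 1
      funext l
      simp [add_comm _ (i : ℕ), Nat.add_mul_div_right _ _ hk, Nat.div_eq_of_lt i.2,
        Nat.mod_eq_of_lt i.2]
    · intro j hj
      rw [if_neg]
      intro hji
      exact hj ⟨j / k, by simp only [← hji, Nat.div_add_mod']⟩
  convert hasSum_sum (s := Finset.univ) fun i _ ↦ residue i using 1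
  · ext j
    rw [Finset.sum_eq_single ⟨j % k, Nat.mod_lt j hk⟩]
    · simp
    · intro i _ hi
      rw [if_neg]
      exact fun h ↦ hi (Fin.ext h.symm)
    · simp
  · simp

theorem pow_le_one_add_pow {r : ℝ} (hr : 0 ≤ r) {m n : ℕ} (hmn : m ≤ n) :
    r ^ m ≤ 1 + r ^ n := by
  rcases le_total r 1 with hr1 | hr1
  · linarith [pow_le_one₀ (n := m) hr hr1, pow_nonneg hr n]
  · linarith [pow_le_pow_right₀ hr1 hmn]

section GammaSeries

variable {k : ℕ} {r : ℝ}

theorem pow_div_Gamma_le_of_lt_two_mul (hr : 0 ≤ r) {m : ℕ} (hm : m < 2 * k) :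
    r ^ m / Gamma ((m + 1) / k) ≤ 2 * (1 + r ^ (2 * k)) := by
  have hk : (0 : ℝ) < k := by norm_cast; omega
  calc r ^ m / Gamma ((m + 1) / k) ≤ r ^ m / (1 / 2) :=
        div_le_div_of_nonneg_left (by positivity) (by norm_num)
          (one_half_le_Gamma (by positivity))
    _ = 2 * r ^ m := by ring
    _ ≤ 2 * (1 + r ^ (2 * k)) := by gcongr; exact pow_le_one_add_pow hr hm.le

theorem sum_pow_div_Gamma_le (hr : 0 ≤ r) :
    ∑ m ∈ Finset.range (2 * k), r ^ m / Gamma ((m + 1) / k) ≤ 4 * k * (1 + r ^ (2 * k)) := by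
  calc _ ≤ ∑ _m ∈ Finset.range (2 * k), 2 * (1 + r ^ (2 * k)) :=
        Finset.sum_le_sum fun m hm ↦
          pow_div_Gamma_le_of_lt_two_mul hr (Finset.mem_range.mp hm)
    _ = 4 * k * (1 + r ^ (2 * k)) := by
        rw [Finset.sum_const, Finset.card_range, nsmul_eq_mul]; push_cast; ring

theorem pow_div_Gamma_le_of_two_mul_le (hk : 0 < k) (hr : 0 ≤ r) (j : ℕ) :
    r ^ (j + 2 * k) / Gamma ((↑(j + 2 * k) + 1) / k) ≤
      (1 + r ^ (2 * k)) * ((r ^ k) ^ (j / k + 1) / (j / k + 1)!) := by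
  have hk' : (0 : ℝ) < k := by exact_mod_cast hk
  have hnum : r ^ (j + 2 * k) ≤ (r ^ k) ^ (j / k + 1) * (1 + r ^ (2 * k)) := by
    have hsplit : j + 2 * k = k * (j / k + 1) + (k + j % k) := by
      have := Nat.div_add_mod j k
      rw [mul_add]
      omega
    rw [hsplit, pow_add, pow_mul]
    gcongr
    exact pow_le_one_add_pow hr (by have := Nat.mod_lt j hk; omega)
  have hden : ((j / k + 1)! : ℝ) ≤ Gamma ((↑(j + 2 * k) + 1) / k) := by
    refine factorial_le_Gamma (Nat.le_add_left 1 _) ?_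
    rw [le_div_iff₀ hk']
    have : (k : ℝ) * ↑(j / k) ≤ j := by exact_mod_cast Nat.mul_div_le j k
    push_cast
    nlinarith
  calc _ ≤ (r ^ k) ^ (j / k + 1) * (1 + r ^ (2 * k)) / (j / k + 1)! :=
        div_le_div₀ (by positivity) hnum (by positivity) hden
    _ = _ := by ring

theorem hasSum_pow_div_factorial_comp_div (hk : 0 < k) (x : ℝ) :
    HasSum (fun j ↦ x ^ (j / k + 1) / (j / k + 1)!) (k * (exp x - 1)) := by
  have : NeZero k := ⟨hk.ne'⟩
  have hexp : HasSum (fun n ↦ x ^ (n + 1) / (n + 1)!) (exp x - 1) := by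
    have := (hasSum_nat_add_iff' 1).mpr (exp_eq_exp_ℝ ▸ NormedSpace.expSeries_div_hasSum_exp x)
    simpa using this
  simpa using hasSum_comp_div hexp k

end GammaSeries

/-- The entire function `H(w) = Σ_{m≥1} w^(m−1)/Γ(m/k)` satisfies
`|H(w)| ≤ 6k(1+|w|^(2k)) e^(|w|^k)` for all `w ∈ ℂ`. -/
theorem stmt_12 (k : ℕ) (hk : 1 ≤ k) (w : ℂ) :
    ‖∑' m : ℕ, w ^ m / (Real.Gamma ((m + 1) / k) : ℂ)‖
      ≤ 6 * k * (1 + ‖w‖ ^ (2 * k)) * Real.exp (‖w‖ ^ k) := by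
  set r := ‖w‖
  have hr : 0 ≤ r := norm_nonneg w
  set F : ℕ → ℝ := fun m ↦ r ^ m / Gamma ((m + 1) / k)
  have hF_nonneg (m : ℕ) : 0 ≤ F m :=
    div_nonneg (by positivity) (Gamma_nonneg_of_nonneg (by positivity))
  have hnorm : (fun m : ℕ ↦ ‖w ^ m / (Gamma ((m + 1) / k) : ℂ)‖) = F := by
    funext m
    rw [norm_div, norm_pow, Complex.norm_real,
      norm_of_nonneg (Gamma_nonneg_of_nonneg (by positivity))]
  have htail := (hasSum_pow_div_factorial_comp_div hk (r ^ k)).mul_left (1 + r ^ (2 * k))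
  have hF : Summable F := (summable_nat_add_iff (2 * k)).mp <|
    htail.summable.of_nonneg_of_le (fun _ ↦ hF_nonneg _) (pow_div_Gamma_le_of_two_mul_le hk hr)
  have hexp : 1 ≤ exp (r ^ k) := one_le_exp (by positivity)
  calc ‖∑' m : ℕ, w ^ m / (Gamma ((m + 1) / k) : ℂ)‖ ≤ ∑' m, F m :=
        hnorm ▸ norm_tsum_le_tsum_norm (hnorm ▸ hF)
    _ = ∑ m ∈ Finset.range (2 * k), F m + ∑' j, F (j + 2 * k) :=
        (hF.sum_add_tsum_nat_add (2 * k)).symm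
    _ ≤ 4 * k * (1 + r ^ (2 * k)) + (1 + r ^ (2 * k)) * (k * (exp (r ^ k) - 1)) :=
        add_le_add (sum_pow_div_Gamma_le hr) <| hasSum_le (pow_div_Gamma_le_of_two_mul_le hk hr)
          ((summable_nat_add_iff (2 * k)).mpr hF).hasSum htail
    _ ≤ 6 * k * (1 + r ^ (2 * k)) * exp (r ^ k) := by
        have : 0 ≤ k * (1 + r ^ (2 * k)) := by positivity
        nlinarith
end

section
/- Borel transform bound: suppose h(x) = Σ_{m=1}^∞ h_m x^m with |h_m| ≤ K T^{m−1} for all m ≥ 1 (K, T > 0). Then the Borel transform of order k, B_k(h)(w) = Σ_{m=1}^∞ (h_m/Γ(m/k)) w^{m−1}, defines an entire function satisfying |B_k(h)(w)| ≤ 6kK(1+T^{2k}|w|^{2k})e^{T^k|w|^k} for all w ∈ ℂ; consequently, for μ > 2^{1/k}·T we have sup_w |B_k(h)(w)|(1+μ^{2k}|w|^{2k})e^{-μ^k|w|^k} ≤ K·C_k with C_k = 384k·e^{-2−√15/2}(4+√15)². -/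
/-!
Write `m = kq + r` with `0 ≤ r < k`. Then `Γ((m + 1)/k) = Γ(a + q)` with `a = (r + 1)/k ∈ (0, 1]`,
and `q! ≤ 2(q + 1) Γ(a + q)`, while `(T|w|)^m ≤ (1 + y) y^q` for `y = T^k |w|^k`. Each `q` comes
from exactly `k` values of `m`, so the series is dominated by
`2kK(1 + y) Σ_q (q + 1) y^q / q! = 2kK(1 + y)² e^y`.
For `μ > 2^{1/k} T` and `t = μ^k |w|^k` we have `2y ≤ t`, and the weighted bound reduces to the
maximum of `(1 + t²)² e^{-t/2}` on `[0, ∞)`, attained at `t = 4 + √15`.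
-/

open Real
open scoped Nat

theorem HasSum.comp_nat_div {α : Type*} [AddCommMonoid α] [TopologicalSpace α] [ContinuousAdd α]
    {f : ℕ → α} {s : α} (hf : HasSum f s) (k : ℕ) [NeZero k] :
    HasSum (fun m => f (m / k)) (k • s) := by
  rw [← (Nat.divModEquiv k).symm.hasSum_iff]
  have hfiber (r : Fin k) : HasSum (fun p : ℕ × Fin k => if p.2 = r then f p.1 else 0) s := by
    rw [← (Prod.mk_left_injective r).hasSum_iff fun p hp => if_neg fun h => hp ⟨p.1, by simp [← h]⟩]
    simpa [Function.comp_def] using hf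
  convert hasSum_sum (s := Finset.univ) fun r _ => hfiber r using 1
  · ext ⟨n, r⟩
    simpa using congrArg (f ∘ Prod.fst) ((Nat.divModEquiv k).apply_symm_apply (n, r))
  · simp

theorem Real.hasSum_succ_mul_pow_div_factorial (y : ℝ) :
    HasSum (fun q : ℕ => (q + 1) * y ^ q / q !) ((1 + y) * Real.exp y) := by
  have hexp : HasSum (fun q : ℕ => y ^ q / q !) (Real.exp y) := by
    rw [Real.exp_eq_exp_ℝ]
    exact NormedSpace.expSeries_div_hasSum_exp y
  have hmul : HasSum (fun q : ℕ => q * y ^ q / q !) (y * Real.exp y) := by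
    refine (hasSum_nat_add_iff' 1).mp ?_
    simp only [Finset.sum_range_one, Nat.cast_zero, zero_mul, zero_div, sub_zero]
    refine (hexp.mul_left y).congr_fun fun q => ?_
    rw [Nat.factorial_succ, pow_succ]
    push_cast
    field_simp
  rw [add_mul, one_mul]
  exact (hexp.add hmul).congr_fun fun q => by ring

theorem Real.one_le_two_mul_Gamma {x : ℝ} (hx : 1 ≤ x) : 1 ≤ 2 * Gamma x := by
  rcases le_or_gt 2 x with h2 | h2
  · have := Gamma_strictMonoOn_Ici.monotoneOn (Set.mem_Ici.2 le_rfl) (Set.mem_Ici.2 h2) h2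
    rw [Gamma_two] at this
    linarith
  · -- `x Γ(x) = Γ(x + 1) ≥ Γ(2) = 1` and `x < 2`
    have h := Gamma_strictMonoOn_Ici.monotoneOn (Set.mem_Ici.2 le_rfl)
      (Set.mem_Ici.2 (by linarith : (2 : ℝ) ≤ x + 1)) (by linarith)
    rw [Gamma_two, Gamma_add_one (by linarith)] at h
    nlinarith [Gamma_pos_of_pos (by linarith : 0 < x)]

theorem Real.factorial_le_two_mul_Gamma {q : ℕ} {x : ℝ} (hx : q + 1 ≤ x) :
    (q ! : ℝ) ≤ 2 * Gamma x := by
  rcases Nat.eq_zero_or_pos q with rfl | hq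
  · simpa using one_le_two_mul_Gamma (by simpa using hx)
  · have h2 : (2 : ℝ) ≤ q + 1 := by norm_cast; omega
    have := Gamma_strictMonoOn_Ici.monotoneOn (Set.mem_Ici.2 h2) (Set.mem_Ici.2 (h2.trans hx)) hx
    rw [Gamma_nat_eq_factorial] at this
    linarith [Gamma_pos_of_pos (by linarith : 0 < x)]

theorem Real.factorial_le_two_mul_succ_mul_Gamma_add {a : ℝ} (ha₀ : 0 < a) (ha₁ : a ≤ 1) (q : ℕ) :
    (q ! : ℝ) ≤ 2 * (q + 1) * Gamma (a + q) := by
  have hΓ := factorial_le_two_mul_Gamma (q := q) (x := a + q + 1) (by linarith)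
  rw [Gamma_add_one (by positivity)] at hΓ
  nlinarith [Gamma_pos_of_pos (by positivity : 0 < a + q)]

theorem pow_le_one_add_pow_s15 {X : ℝ} (hX : 0 ≤ X) {r k : ℕ} (hrk : r ≤ k) : X ^ r ≤ 1 + X ^ k := by
  rcases le_total X 1 with hX1 | hX1
  · linarith [pow_le_one₀ hX hX1 (n := r), pow_nonneg hX k]
  · linarith [pow_le_pow_right₀ hX1 hrk]

theorem pow_div_Gamma_le {k : ℕ} (hk : k ≠ 0) {X : ℝ} (hX : 0 ≤ X) (m : ℕ) :
    X ^ m / Real.Gamma ((m + 1) / k) ≤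
      2 * (1 + X ^ k) * (((m / k : ℕ) + 1) * (X ^ k) ^ (m / k) / (m / k)!) := by
  set q := m / k
  set r := m % k
  have hkpos : (0 : ℝ) < k := by positivity
  have hr : r < k := Nat.mod_lt m (Nat.pos_of_ne_zero hk)
  have hm : k * q + r = m := Nat.div_add_mod m k
  set a : ℝ := (r + 1) / k
  have ha₀ : 0 < a := by positivity
  have ha₁ : a ≤ 1 := by
    rw [div_le_one hkpos]
    exact_mod_cast hr
  have harg : ((m : ℝ) + 1) / k = a + q := by
    simp only [a, ← hm]
    push_cast
    field_simp
    ring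
  have hΓ : 0 < Real.Gamma (a + q) := Gamma_pos_of_pos (by positivity)
  have hfact := factorial_le_two_mul_succ_mul_Gamma_add ha₀ ha₁ q
  have hXr : X ^ r ≤ 1 + X ^ k := pow_le_one_add_pow_s15 hX hr.le
  rw [harg, div_le_iff₀ hΓ, ← hm, pow_add, pow_mul]
  calc (X ^ k) ^ q * X ^ r ≤ (1 + X ^ k) * ((X ^ k) ^ q / q !) * q ! := by
        rw [mul_assoc, div_mul_cancel₀ _ (by positivity)]
        nlinarith [pow_nonneg (pow_nonneg hX k) q]
    _ ≤ (1 + X ^ k) * ((X ^ k) ^ q / q !) * (2 * (q + 1) * Real.Gamma (a + q)) := by gcongr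
    _ = _ := by ring

/-- `t₀ = 4 + √15` is the root of `t² - 8t + 1` at which `(1 + t²) e^{-t/4}` is maximal on
`[0, ∞)`, so this is an equality at `t = t₀`. -/
theorem one_add_sq_le_mul_exp {t : ℝ} (ht : 0 ≤ t) :
    1 + t ^ 2 ≤ 8 * (4 + √15) * Real.exp ((t - (4 + √15)) / 4) := by
  set t₀ := 4 + √15
  have hs : √15 ^ 2 = 15 := Real.sq_sqrt (by norm_num)
  have ht₀_lo : 54 / 7 ≤ t₀ := by nlinarith [Real.sqrt_nonneg 15]
  have ht₀_hi : t₀ ≤ 8 := by nlinarith [Real.sqrt_nonneg 15]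
  set x := (t - t₀) / 4
  have hexpand : 1 + t ^ 2 = 8 * t₀ * (1 + x) + 16 * x ^ 2 := by
    have : t = t₀ + 4 * x := by simp only [x]; ring
    rw [this]
    nlinarith
  rcases le_total 0 x with hx | hx
  · nlinarith [quadratic_le_exp_of_nonneg hx, sq_nonneg x]
  · -- `(1 + x/3)³ ≤ eˣ` is just sharp enough on `[-2, 0]` since `t₀ ≥ 54/7`
    have h3 : (1 - -x / (3 : ℕ)) ^ 3 ≤ Real.exp (- -x) :=
      one_sub_div_pow_le_exp_neg (by push_cast; simp only [x]; linarith)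
    rw [neg_neg] at h3
    push_cast at h3
    have hx2 : -2 ≤ x := by simp only [x]; linarith
    nlinarith [mul_nonneg (sq_nonneg x) (by nlinarith : (0 : ℝ) ≤ t₀ * (9 + x) - 54)]

theorem one_add_sq_sq_mul_exp_neg_half_le {t : ℝ} (ht : 0 ≤ t) :
    (1 + t ^ 2) ^ 2 * Real.exp (-(t / 2)) ≤
      64 * (4 + √15) ^ 2 * Real.exp (-2 - √15 / 2) := by
  have hsq := pow_le_pow_left₀ (by positivity) (one_add_sq_le_mul_exp ht) 2
  have hexp : Real.exp ((t - (4 + √15)) / 4) ^ 2 * Real.exp (-(t / 2)) =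
      Real.exp (-2 - √15 / 2) := by
    rw [← Real.exp_nat_mul, ← Real.exp_add]
    congr 1
    push_cast
    ring
  calc (1 + t ^ 2) ^ 2 * Real.exp (-(t / 2))
      ≤ (8 * (4 + √15) * Real.exp ((t - (4 + √15)) / 4)) ^ 2 * Real.exp (-(t / 2)) := by gcongr
    _ = 64 * (4 + √15) ^ 2 * Real.exp (-2 - √15 / 2) := by rw [← hexp]; ring

theorem norm_tsum_div_Gamma_mul_pow_le {k : ℕ} (hk : k ≠ 0) {K T : ℝ} (hK : 0 ≤ K) (hT : 0 ≤ T)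
    {c : ℕ → ℂ} (hc : ∀ m, ‖c m‖ ≤ K * T ^ m) (w : ℂ) :
    ‖∑' m : ℕ, c m / (Real.Gamma ((m + 1) / k) : ℂ) * w ^ m‖ ≤
      2 * k * K * (1 + T ^ k * ‖w‖ ^ k) ^ 2 * Real.exp (T ^ k * ‖w‖ ^ k) := by
  have := NeZero.mk hk
  set X := T * ‖w‖
  have hX : 0 ≤ X := by positivity
  rw [← mul_pow]
  set y := X ^ k
  have hmaj :=
    ((Real.hasSum_succ_mul_pow_div_factorial y).comp_nat_div k).mul_left (2 * K * (1 + y))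
  refine (tsum_of_norm_bounded hmaj fun m => ?_).trans_eq (by rw [nsmul_eq_mul]; ring)
  have hΓ : 0 < Real.Gamma ((m + 1) / k) := Real.Gamma_pos_of_pos (by positivity)
  rw [norm_mul, norm_div, norm_pow, Complex.norm_real, Real.norm_of_nonneg hΓ.le]
  calc ‖c m‖ / Real.Gamma ((m + 1) / k) * ‖w‖ ^ m
      ≤ K * T ^ m / Real.Gamma ((m + 1) / k) * ‖w‖ ^ m := by gcongr; exact hc m
    _ = K * (X ^ m / Real.Gamma ((m + 1) / k)) := by rw [mul_pow]; ring
    _ ≤ K * (2 * (1 + y) * (((m / k : ℕ) + 1) * y ^ (m / k) / (m / k)!)) := by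
        gcongr; exact pow_div_Gamma_le hk hX m
    _ = _ := by ring

theorem mul_one_add_sq_mul_exp_neg_le {N C y t : ℝ} (hC : 0 ≤ C) (hy : 0 ≤ y) (hyt : 2 * y ≤ t)
    (hN : N ≤ C * (1 + y) ^ 2 * Real.exp y) :
    N * (1 + t ^ 2) * Real.exp (-t) ≤ 128 * C * (4 + √15) ^ 2 * Real.exp (-2 - √15 / 2) := by
  have ht : 0 ≤ t := by linarith
  have hN' : N ≤ C * (2 * (1 + t ^ 2)) * Real.exp (t / 2) := by
    refine hN.trans ?_
    gcongr
    · nlinarith [sq_nonneg (1 - y), mul_self_le_mul_self hy (show y ≤ t by linarith)]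
    · linarith
  calc N * (1 + t ^ 2) * Real.exp (-t)
      ≤ C * (2 * (1 + t ^ 2)) * Real.exp (t / 2) * (1 + t ^ 2) * Real.exp (-t) := by gcongr
    _ = 2 * C * ((1 + t ^ 2) ^ 2 * Real.exp (-(t / 2))) := by
        rw [show -(t / 2) = t / 2 + -t by ring, Real.exp_add]
        ring
    _ ≤ 2 * C * (64 * (4 + √15) ^ 2 * Real.exp (-2 - √15 / 2)) := by
        exact mul_le_mul_of_nonneg_left (one_add_sq_sq_mul_exp_neg_half_le ht) (by positivity)
    _ = _ := by ring

theorem two_mul_pow_lt_pow_of_rpow_mul_lt {k : ℕ} (hk : k ≠ 0) {T μ : ℝ} (hT : 0 ≤ T)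
    (hμ : (2 : ℝ) ^ ((1 : ℝ) / k) * T < μ) : 2 * T ^ k < μ ^ k := by
  have h2 : ((2 : ℝ) ^ ((1 : ℝ) / k)) ^ k = 2 := by
    rw [← Real.rpow_mul_natCast (by norm_num), one_div_mul_cancel (by exact_mod_cast hk),
      Real.rpow_one]
  calc 2 * T ^ k = ((2 : ℝ) ^ ((1 : ℝ) / k) * T) ^ k := by rw [mul_pow, h2]
    _ < μ ^ k := pow_lt_pow_left₀ hμ (by positivity) hk

/-- Borel transform bound: if `h(x) = Σ_{m≥1} h_m x^m` with `|h_m| ≤ K T^(m−1)`, then the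
order-`k` Borel transform `B_k(h)(w) = Σ_{m≥1} h_m w^(m−1)/Γ(m/k)` satisfies
`|B_k(h)(w)| ≤ 6kK(1+T^(2k)|w|^(2k)) e^(T^k|w|^k)`, and for `μ > 2^(1/k) T` the weighted
norm bound `|B_k(h)(w)|(1+μ^(2k)|w|^(2k)) e^(-μ^k|w|^k) ≤ K C_k` holds, with
`C_k = 384 k e^(-2−√15/2)(4+√15)²`. -/
theorem stmt_15 (k : ℕ) (hk : 1 ≤ k) (K T : ℝ) (hK : 0 < K) (hT : 0 < T)
    (h : ℕ → ℂ) (hbound : ∀ m : ℕ, 1 ≤ m → ‖h m‖ ≤ K * T ^ (m - 1)) :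
    (∀ w : ℂ,
      ‖∑' m : ℕ, h (m + 1) / (Real.Gamma ((m + 1) / k) : ℂ) * w ^ m‖
        ≤ 6 * k * K * (1 + T ^ (2 * k) * ‖w‖ ^ (2 * k)) * Real.exp (T ^ k * ‖w‖ ^ k)) ∧
    ∀ μ : ℝ, (2 : ℝ) ^ ((1 : ℝ) / k) * T < μ →
      ∀ w : ℂ,
        ‖∑' m : ℕ, h (m + 1) / (Real.Gamma ((m + 1) / k) : ℂ) * w ^ m‖
            * (1 + μ ^ (2 * k) * ‖w‖ ^ (2 * k)) * Real.exp (-(μ ^ k * ‖w‖ ^ k))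
          ≤ K * (384 * k * Real.exp (-2 - Real.sqrt 15 / 2) * (4 + Real.sqrt 15) ^ 2) := by
  have hk₀ : k ≠ 0 := by omega
  have hB := norm_tsum_div_Gamma_mul_pow_le hk₀ hK.le hT.le (c := fun m => h (m + 1))
    fun m => by simpa using hbound (m + 1) (by omega)
  have hsq (a : ℝ) (w : ℂ) : a ^ (2 * k) * ‖w‖ ^ (2 * k) = (a ^ k * ‖w‖ ^ k) ^ 2 := by ring
  refine ⟨fun w => (hB w).trans ?_, fun μ hμ w => ?_⟩
  · rw [hsq]
    set y := T ^ k * ‖w‖ ^ k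
    calc 2 * k * K * (1 + y) ^ 2 * Real.exp y = k * K * (2 * (1 + y) ^ 2) * Real.exp y := by ring
      _ ≤ k * K * (6 * (1 + y ^ 2)) * Real.exp y := by
          gcongr _ * _ * ?_ * _
          nlinarith [sq_nonneg (1 - y)]
      _ = 6 * k * K * (1 + y ^ 2) * Real.exp y := by ring
  · have hμk := two_mul_pow_lt_pow_of_rpow_mul_lt hk₀ hT.le hμ
    rw [hsq]
    refine (mul_one_add_sq_mul_exp_neg_le (by positivity) (by positivity) ?_ (hB w)).trans ?_
    · nlinarith [pow_nonneg (norm_nonneg w) k]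
    · have : 0 ≤ k * K * (4 + √15) ^ 2 * Real.exp (-2 - √15 / 2) := by positivity
      nlinarith
end
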